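/- arXiv:2312.09371 — 2 statements merged into one kernel-verified Lean document; each statement's English description precedes it below -/
import Mathlib

section
/- For every integer m ≥ 0 there exist 30m+27 pairwise edge-disjoint 5-star factors of the complete graph on 180m+162 vertices. -/
open Finset

/-- A 5-star `K_{1,5}`: one center joined by edges to 5 leaves. -/
structure Star5 (V : Type*) where
  center : V
  leaves : Finset V
  card_leaves : leaves.card = 5
  center_not_leaf : center ∉ leaves

namespace Star5
variable {V : Type*} [DecidableEq V]

/-- The vertex set of a 5-star. -/
def verts (s : Star5 V) : Finset V := insert s.center s.leaves

/-- The edge set of a 5-star. -/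
def edges (s : Star5 V) : Finset (Sym2 V) := s.leaves.image (fun l => s(s.center, l))

end Star5

/-- A 5-star factor of the complete graph on `V`: pairwise vertex-disjoint 5-stars
covering every vertex. -/
def IsStar5Factor {V : Type*} [DecidableEq V] [Fintype V] (F : Finset (Star5 V)) : Prop :=
  (∀ s ∈ F, ∀ t ∈ F, s ≠ t → Disjoint s.verts t.verts) ∧
  ∀ v : V, ∃ s ∈ F, v ∈ s.verts

/-- All edges used by a set of 5-stars. -/
def factorEdges {V : Type*} [DecidableEq V] (F : Finset (Star5 V)) : Finset (Sym2 V) :=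
  F.biUnion Star5.edges

/- ### Auxiliary machinery -/

instance {V : Type*} [DecidableEq V] : DecidableEq (Star5 V) := fun a b =>
  decidable_of_iff (a.center = b.center ∧ a.leaves = b.leaves) (by
    cases a; cases b; simp)

namespace Star5
variable {V W : Type*} [DecidableEq V] [DecidableEq W]

/-- Transport a 5-star along an equivalence. -/
def mapE (e : V ≃ W) (s : Star5 V) : Star5 W where
  center := e s.center
  leaves := s.leaves.map e.toEmbedding
  card_leaves := by simp [s.card_leaves]
  center_not_leaf := by simp [s.center_not_leaf]

lemma mapE_inj (e : V ≃ W) : Function.Injective (mapE e) := by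
  intro s t h
  cases s; cases t
  simp only [mapE, Star5.mk.injEq] at h ⊢
  exact ⟨e.injective h.1, Finset.map_injective _ h.2⟩

lemma verts_mapE (e : V ≃ W) (s : Star5 V) :
    (mapE e s).verts = s.verts.map e.toEmbedding := by
  simp [mapE, verts, Finset.map_insert]

lemma edges_mapE (e : V ≃ W) (s : Star5 V) :
    (mapE e s).edges = s.edges.image (Sym2.map e) := by
  simp only [mapE, edges, Finset.map_eq_image, Finset.image_image]
  ext x
  simp only [mem_image, Function.comp_apply, Sym2.map_pair_eq, Equiv.coe_toEmbedding]

end Star5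

lemma factorEdges_mapE {V W : Type*} [DecidableEq V] [DecidableEq W] (e : V ≃ W)
    (F : Finset (Star5 V)) :
    factorEdges (F.image (Star5.mapE e)) = (factorEdges F).image (Sym2.map e) := by
  unfold factorEdges
  rw [Finset.biUnion_image, Finset.image_biUnion]
  exact Finset.biUnion_congr rfl fun s _ => Star5.edges_mapE e s

lemma IsStar5Factor.mapE {V W : Type*} [DecidableEq V] [Fintype V] [DecidableEq W] [Fintype W]
    (e : V ≃ W) {F : Finset (Star5 V)} (h : IsStar5Factor F) :
    IsStar5Factor (F.image (Star5.mapE e)) := by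
  constructor
  · intro s hs t ht hst
    simp only [mem_image] at hs ht
    obtain ⟨s', hs', rfl⟩ := hs
    obtain ⟨t', ht', rfl⟩ := ht
    rw [Star5.verts_mapE, Star5.verts_mapE, Finset.disjoint_map]
    exact h.1 s' hs' t' ht' (fun hh => hst (by rw [hh]))
  · intro w
    obtain ⟨s, hs, hv⟩ := h.2 (e.symm w)
    refine ⟨Star5.mapE e s, mem_image_of_mem _ hs, ?_⟩
    rw [Star5.verts_mapE, mem_map]
    exact ⟨e.symm w, hv, e.apply_symm_apply w⟩

/- ### The concrete construction on `Fin k × Fin 6` -/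

section Construction

variable (m : ℕ)

local notation "k" => 30*m+27

instance : NeZero (30*m+27) := ⟨by omega⟩

/-- The star of column `c` in factor `i`. -/
def myStar (i c : Fin (30*m+27)) : Star5 (Fin (30*m+27) × Fin 6) where
  center := (c, 0)
  leaves := ({1,2,3,4,5} : Finset (Fin 6)).image (fun r => (c + i, r))
  card_leaves := by
    rw [Finset.card_image_of_injective _ (fun a b h => by
      simpa using congrArg Prod.snd h)]
    decide
  center_not_leaf := by
    simp only [mem_image, Prod.mk.injEq, not_exists, not_and]
    intro r hr _ h2
    subst h2
    revert hr
    decide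

lemma myStar_factor (i : Fin (30*m+27)) :
    IsStar5Factor ((univ : Finset (Fin (30*m+27))).image (myStar m i)) := by
  constructor
  · intro s hs t ht hst
    simp only [mem_image, mem_univ, true_and] at hs ht
    obtain ⟨c, rfl⟩ := hs
    obtain ⟨c', rfl⟩ := ht
    have hcc : c ≠ c' := fun h => hst (by rw [h])
    rw [Finset.disjoint_left]
    rintro ⟨a, b⟩ hx hx'
    simp only [Star5.verts, myStar, mem_insert, mem_image, Prod.mk.injEq] at hx hx'
    rcases hx with ⟨h1, h2⟩ | ⟨r, hr, h1, h2⟩ <;>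
      rcases hx' with ⟨h1', h2'⟩ | ⟨r', hr', h1', h2'⟩
    · exact hcc (h1.symm.trans h1')
    · rw [h2] at h2'; subst h2'; revert hr'; decide
    · rw [h2'] at h2; subst h2; revert hr; decide
    · exact hcc (add_right_cancel (h1.trans h1'.symm))
  · rintro ⟨c, r⟩
    by_cases hr : r = 0
    · subst hr
      exact ⟨myStar m i c, mem_image_of_mem _ (mem_univ c), by
        simp [Star5.verts, myStar]⟩
    · refine ⟨myStar m i (c - i), mem_image_of_mem _ (mem_univ _), ?_⟩
      simp only [Star5.verts, myStar, mem_insert, mem_image, Prod.mk.injEq]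
      right
      exact ⟨r, by revert hr; revert r; decide, by rw [sub_add_cancel], rfl⟩

lemma myStar_edge_disjoint {i j : Fin (30*m+27)} (hij : i ≠ j) :
    Disjoint (factorEdges ((univ : Finset (Fin (30*m+27))).image (myStar m i)))
      (factorEdges ((univ : Finset (Fin (30*m+27))).image (myStar m j))) := by
  rw [Finset.disjoint_left]
  intro e he he'
  simp only [factorEdges, mem_biUnion, mem_image, mem_univ, true_and] at he he'
  obtain ⟨s, ⟨c, rfl⟩, hes⟩ := he
  obtain ⟨t, ⟨c', rfl⟩, het⟩ := he'
  simp only [Star5.edges, myStar, mem_image, Finset.mem_image] at hes het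
  obtain ⟨l, hl, hee1⟩ := hes
  obtain ⟨l', hl', hee2⟩ := het
  obtain ⟨r, hr, hlr⟩ := hl
  obtain ⟨r', hr', hlr'⟩ := hl'
  have heq : s((c, (0:Fin 6)), l) = s((c', (0:Fin 6)), l') := hee1.trans hee2.symm
  rw [Sym2.eq_iff] at heq
  rcases heq with ⟨h1, h2⟩ | ⟨h1, h2⟩
  · -- centers match, leaves match
    have hc : c = c' := congrArg Prod.fst h1
    have hll : (c + i, r) = ((c' + j, r') : Fin (30*m+27) × Fin 6) := by
      rw [hlr, hlr', h2]
    have hci : c + i = c' + j := congrArg Prod.fst hll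
    rw [← hc] at hci
    exact hij (add_left_cancel hci)
  · -- center = leaf : impossible since second coordinates differ
    have hcl : ((c : Fin (30*m+27)), (0:Fin 6)) = (c' + j, r') := by rw [h1, hlr']
    have : (0 : Fin 6) = r' := congrArg Prod.snd hcl
    rw [← this] at hr'
    revert hr'; decide

end Construction

theorem part1_factors_t3 :
    ∀ m : ℕ, 
    ∃ F : Fin (30*m+27) → Finset (Star5 (Fin (180*m+162))),
      (∀ i, IsStar5Factor (F i)) ∧
      ∀ i j, i ≠ j → Disjoint (factorEdges (F i)) (factorEdges (F j)) := by
  intro m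
  have e : (Fin (30*m+27) × Fin 6) ≃ Fin (180*m+162) :=
    Fintype.equivFinOfCardEq (by simp; ring)
  refine ⟨fun i => ((univ : Finset (Fin (30*m+27))).image (myStar m i)).image (Star5.mapE e),
    fun i => (myStar_factor m i).mapE e, fun i j hij => ?_⟩
  rw [factorEdges_mapE, factorEdges_mapE]
  exact Finset.disjoint_image (Sym2.map.injective e.injective) |>.mpr
    (myStar_edge_disjoint m hij)
end

section
/- For every integer m ≥ 0 there exist 30m+22 pairwise edge-disjoint 5-star factors of the complete graph on 180m+132 vertices. -/
open Finset

noncomputable instance {V : Type*} : DecidableEq (Star5 V) := Classical.decEq _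

noncomputable section Construction

variable {t n : ℕ} [NeZero t] (e : Fin 6 × Fin t ≃ Fin n)

/-- The star with center `(0, a)` and leaves `{(r, a+i) : r ≠ 0}`, transported along `e`. -/
def mkStar (i a : Fin t) : Star5 (Fin n) where
  center := e (0, a)
  leaves := ((univ : Finset (Fin 6)).filter (fun r => r ≠ 0)).image (fun r => e (r, a + i))
  card_leaves := by
    rw [Finset.card_image_of_injective _ (fun r r' h => congrArg Prod.fst (e.injective h))]
    decide
  center_not_leaf := by
    simp only [Finset.mem_image, Finset.mem_filter, Finset.mem_univ, true_and]
    rintro ⟨r, hr, h⟩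
    exact hr (congrArg Prod.fst (e.injective h))

lemma mem_mkStar_verts (i a : Fin t) (v : Fin n) :
    v ∈ (mkStar e i a).verts ↔
      ((e.symm v).1 = 0 ∧ (e.symm v).2 = a) ∨ ((e.symm v).1 ≠ 0 ∧ (e.symm v).2 = a + i) := by
  simp only [Star5.verts, mkStar, Finset.mem_insert, Finset.mem_image, Finset.mem_filter,
    Finset.mem_univ, true_and]
  constructor
  · rintro (rfl | ⟨r, hr, rfl⟩)
    · simp
    · simp [hr]
  · rintro (⟨h1, h2⟩ | ⟨h1, h2⟩)
    · left
      have : e.symm v = (0, a) := Prod.ext h1 h2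
      rw [← this, Equiv.apply_symm_apply]
    · right
      refine ⟨(e.symm v).1, h1, ?_⟩
      have : ((e.symm v).1, a + i) = e.symm v := Prod.ext rfl h2.symm
      rw [this, Equiv.apply_symm_apply]

omit [NeZero t] in
lemma mem_mkStar_edges (i a : Fin t) (x : Sym2 (Fin n)) :
    x ∈ (mkStar e i a).edges ↔ ∃ r : Fin 6, r ≠ 0 ∧ x = s(e (0, a), e (r, a + i)) := by
  simp only [Star5.edges, mkStar, Finset.mem_image, Finset.mem_filter, Finset.mem_univ, true_and]
  constructor
  · rintro ⟨l, ⟨r, hr, rfl⟩, rfl⟩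
    exact ⟨r, hr, rfl⟩
  · rintro ⟨r, hr, rfl⟩
    exact ⟨e (r, a + i), ⟨r, hr, rfl⟩, rfl⟩

lemma isFactor_mkStar (i : Fin t) :
    IsStar5Factor ((univ : Finset (Fin t)).image (mkStar e i)) := by
  constructor
  · intro s hs u hu hne
    simp only [Finset.mem_image, Finset.mem_univ, true_and] at hs hu
    obtain ⟨a, rfl⟩ := hs
    obtain ⟨b, rfl⟩ := hu
    have hab : a ≠ b := fun h => hne (by rw [h])
    rw [Finset.disjoint_left]
    intro v hv hv'
    rw [mem_mkStar_verts] at hv hv'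
    rcases hv with ⟨h1, h2⟩ | ⟨h1, h2⟩ <;> rcases hv' with ⟨h1', h2'⟩ | ⟨h1', h2'⟩
    · exact hab (h2.symm.trans h2')
    · exact h1' h1
    · exact h1 h1'
    · exact hab (add_right_cancel (h2.symm.trans h2'))
  · intro v
    rcases eq_or_ne (e.symm v).1 0 with h0 | h0
    · exact ⟨mkStar e i (e.symm v).2, Finset.mem_image_of_mem _ (Finset.mem_univ _),
        (mem_mkStar_verts e i _ v).2 (Or.inl ⟨h0, rfl⟩)⟩
    · refine ⟨mkStar e i ((e.symm v).2 - i), Finset.mem_image_of_mem _ (Finset.mem_univ _),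
        (mem_mkStar_verts e i _ v).2 (Or.inr ⟨h0, ?_⟩)⟩
      rw [sub_add_cancel]

lemma edges_disjoint_mkStar {i j : Fin t} (hij : i ≠ j) :
    Disjoint (factorEdges ((univ : Finset (Fin t)).image (mkStar e i)))
      (factorEdges ((univ : Finset (Fin t)).image (mkStar e j))) := by
  rw [Finset.disjoint_left]
  intro x hx hx'
  simp only [factorEdges, Finset.mem_biUnion, Finset.mem_image, Finset.mem_univ, true_and] at hx hx'
  obtain ⟨s, ⟨a, rfl⟩, hx⟩ := hx
  obtain ⟨s', ⟨b, rfl⟩, hx'⟩ := hx'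
  rw [mem_mkStar_edges] at hx hx'
  obtain ⟨r, hr, rfl⟩ := hx
  obtain ⟨r', hr', h⟩ := hx'
  rw [Sym2.eq_iff] at h
  rcases h with ⟨h1, h2⟩ | ⟨h1, h2⟩
  · have hab : ((0 : Fin 6), a) = (0, b) := e.injective h1
    have hab2 : a = b := congrArg Prod.snd hab
    have h2' : ((r : Fin 6), a + i) = (r', b + j) := e.injective h2
    have : a + i = b + j := congrArg Prod.snd h2'
    rw [← hab2] at this
    exact hij (add_left_cancel this)
  · have h1' : ((0 : Fin 6), a) = (r', b + j) := e.injective h1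
    exact hr' (congrArg Prod.fst h1').symm

end Construction

theorem part1_factors_t4 :
    ∀ m : ℕ, 
    ∃ F : Fin (30*m+22) → Finset (Star5 (Fin (180*m+132))),
      (∀ i, IsStar5Factor (F i)) ∧
      ∀ i j, i ≠ j → Disjoint (factorEdges (F i)) (factorEdges (F j)) := by
  intro m
  haveI : NeZero (30*m+22) := ⟨by omega⟩
  have h : 6 * (30*m+22) = 180*m+132 := by ring
  let e : Fin 6 × Fin (30*m+22) ≃ Fin (180*m+132) := finProdFinEquiv.trans (finCongr h)
  exact ⟨fun i => (univ : Finset (Fin (30*m+22))).image (mkStar e i),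
    fun i => isFactor_mkStar e i, fun i j hij => edges_disjoint_mkStar e hij⟩
end
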